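/- There exists an absolute constant C > 0 such that the following holds for all ε ∈ (0, 1/2]. Let M* ∈ ℝ^{p1×p2} have rank r with SVD M* = U*·Σ·V*^T, where Σ ∈ ℝ^{r×r} is diagonal with positive entries and U*, V* have orthonormal columns; set L* = U*·Σ^{1/2} and R* = V*·Σ^{1/2}. Let L ∈ ℝ^{p1×r}, R ∈ ℝ^{p2×r}, Δ_L = L − L*, Δ_R = R − R*, and suppose ‖Δ_L·Σ^{1/2}‖_F^2 + ‖Δ_R·Σ^{1/2}‖_F^2 ≤ ε^2·σ_r(M*)^2. Then: max(‖Δ_L·Σ^{-1/2}‖, ‖Δ_R·Σ^{-1/2}‖) ≤ ε; ‖L(L^T·L)^{-1}·Σ^{1/2}‖ ≤ 1 + C·ε; ‖R(R^T·R)^{-1}·Σ^{1/2}‖ ≤ 1 + C·ε; ‖L(L^T·L)^{-1}·Σ^{1/2} − U*‖ ≤ C·ε; and ‖R(R^T·R)^{-1}·Σ^{1/2} − V*‖ ≤ C·ε. -/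

import Mathlib

/-!
Let `σ = σ_r(M*)`. The nonzero eigenvalues of `M*ᵀ M* = V* Σ² V*ᵀ` are the entries of `Σ²`
(compare the characteristic polynomials of `AB` and `BA`), so `σ ≤ Σ_jj` for every `j`. Since
the spectral norm is at most the Frobenius norm, the hypothesis gives `‖Δ Σ^{1/2}‖ ≤ ε σ`, hence
`‖Δ Σ^{-1/2}‖ ≤ ε`, i.e. `X = L Σ^{-1/2}` is `ε`-close to the isometry `U*`.
As `L (LᵀL)⁻¹ Σ^{1/2} = X (XᵀX)⁻¹`, it remains to perturb an isometry: `‖X x‖ ≥ (1 - ε) ‖x‖`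
gives `‖(XᵀX)⁻¹‖ ≤ 4`, while `‖XᵀX - 1‖ ≤ 5ε/2`; so `‖(XᵀX)⁻¹ - 1‖ ≤ 10ε` and
`‖X (XᵀX)⁻¹ - U*‖ ≤ 16ε`. Finally `spec` is bounded by the L2 operator norm, because
`‖A‖² = ‖AᵀA‖` dominates every eigenvalue of `AᵀA`.
-/

noncomputable section

open scoped BigOperators

namespace HomoPursuit

open Matrix

/-- Squared Frobenius norm of a real matrix. -/
def frobSq {m n : Type*} [Fintype m] [Fintype n] (A : Matrix m n ℝ) : ℝ :=
  ∑ i, ∑ j, (A i j) ^ 2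

/-- Frobenius norm of a real matrix. -/
def frob {m n : Type*} [Fintype m] [Fintype n] (A : Matrix m n ℝ) : ℝ :=
  Real.sqrt (frobSq A)

/-- Frobenius inner product `⟨A, B⟩ = tr(Aᵀ B)`. -/
def mdot {m n : Type*} [Fintype m] [Fintype n] (A B : Matrix m n ℝ) : ℝ :=
  ∑ i, ∑ j, A i j * B i j

/-- The `j`-th largest singular value of a real matrix (1-indexed); `0` if out of range. -/
def sval {m n : Type*} [Fintype m] [Fintype n] [DecidableEq n] (A : Matrix m n ℝ) (j : ℕ) : ℝ :=
  (((Finset.univ.val.map fun i =>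
      Real.sqrt ((show (Aᵀ * A).IsHermitian from by
        rw [← Matrix.conjTranspose_eq_transpose_of_trivial]
        exact Matrix.isHermitian_conjTranspose_mul_self A).eigenvalues i)).toList.insertionSort
      (· ≥ ·)).getD (j - 1) 0)

/-- Spectral (operator) norm: the largest singular value. -/
def spec {m n : Type*} [Fintype m] [Fintype n] [DecidableEq n] (A : Matrix m n ℝ) : ℝ :=
  sval A 1

/-- The positive-semidefinite square root `(Aᵀ A)^{1/2}` of a Gram matrix. -/
def gramSqrt {m k : Type*} [Fintype m] [Fintype k] [DecidableEq k] (A : Matrix m k ℝ) :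
    Matrix k k ℝ :=
  let hA := (Matrix.posSemidef_conjTranspose_mul_self A).1
  (hA.eigenvectorUnitary : Matrix k k ℝ) *
    Matrix.diagonal ((RCLike.ofReal : ℝ → ℝ) ∘ Real.sqrt ∘ hA.eigenvalues) *
    (star hA.eigenvectorUnitary : Matrix k k ℝ)

/-- `(Aᵀ A)^{-1/2}`. -/
def invGramSqrt {m k : Type*} [Fintype m] [Fintype k] [DecidableEq k] (A : Matrix m k ℝ) :
    Matrix k k ℝ :=
  (gramSqrt A)⁻¹

/-- Square root of a diagonal matrix with given (nonnegative) diagonal entries. -/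
def diagSqrt {k : ℕ} (d : Fin k → ℝ) : Matrix (Fin k) (Fin k) ℝ :=
  Matrix.diagonal fun j => Real.sqrt (d j)

end HomoPursuit

open Matrix WithLp
open scoped Matrix.Norms.L2Operator

theorem List.getD_le_of_countP_lt_le {α : Type*} [LinearOrder α] {s : List α}
    (hs : s.Pairwise (· ≥ ·)) {d t : α} (hdt : d ≤ t) {k : ℕ}
    (hk : s.countP (fun x => t < x) ≤ k) : s.getD k d ≤ t := by
  induction s generalizing k with
  | nil => simpa using hdt
  | cons a s ih =>
    rw [List.pairwise_cons] at hs
    cases k with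
    | zero => simpa using List.countP_eq_zero.mp (Nat.le_zero.mp hk) a List.mem_cons_self
    | succ k =>
      refine ih hs.2 ?_
      rw [List.countP_cons] at hk
      by_cases hta : t < a
      · simpa [hta] using hk
      · have : s.countP (fun x => t < x) = 0 :=
          List.countP_eq_zero.mpr fun x hx => by simpa using (hs.1 x hx).trans (not_lt.mp hta)
        omega

namespace Matrix

theorem isHermitian_transpose_mul_self {m n : Type*} [Fintype m] (A : Matrix m n ℝ) :
    (Aᵀ * A).IsHermitian := by
  simpa only [conjTranspose_eq_transpose_of_trivial] using isHermitian_conjTranspose_mul_self A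

variable {m n : Type*} [Fintype m] [Fintype n]

theorem roots_charpoly_mul_diagonal_mul_transpose [DecidableEq m] [DecidableEq n]
    (V : Matrix m n ℝ) (hV : Vᵀ * V = 1) (d : n → ℝ) :
    Fintype.card n • {0} + (V * diagonal d * Vᵀ).charpoly.roots =
      Fintype.card m • {0} + Finset.univ.val.map d := by
  have h := congrArg Polynomial.roots (charpoly_mul_comm' V (diagonal d * Vᵀ))
  have hprod : ∏ i, (Polynomial.X - Polynomial.C (d i)) =
      ((Finset.univ.val.map d).map fun a => Polynomial.X - Polynomial.C a).prod := by
    rw [Multiset.map_map]; rfl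
  rwa [Polynomial.roots_mul ((Polynomial.monic_X_pow _).mul (charpoly_monic _)).ne_zero,
    Polynomial.roots_mul ((Polynomial.monic_X_pow _).mul (charpoly_monic _)).ne_zero,
    Polynomial.roots_X_pow, Polynomial.roots_X_pow, ← Matrix.mul_assoc V,
    Matrix.mul_assoc (diagonal d), hV, Matrix.mul_one, charpoly_diagonal, hprod,
    Polynomial.roots_multiset_prod_X_sub_C] at h

theorem IsHermitian.l2_opNorm_eq {𝕜 : Type*} [RCLike 𝕜] [DecidableEq n] {A : Matrix n n 𝕜}
    (hA : A.IsHermitian) : ‖A‖ = ‖hA.eigenvalues‖ := by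
  conv_lhs => rw [hA.spectral_theorem, Unitary.conjStarAlgAut_apply, ← Unitary.coe_star]
  rw [CStarRing.norm_mul_coe_unitary, CStarRing.norm_coe_unitary_mul, l2_opNorm_diagonal]
  simp [Pi.norm_def]

theorem l2_opNorm_sq_eq_norm_eigenvalues [DecidableEq n] (A : Matrix m n ℝ) :
    ‖A‖ ^ 2 = ‖(isHermitian_transpose_mul_self A).eigenvalues‖ := by
  rw [← IsHermitian.l2_opNorm_eq, sq, ← l2_opNorm_conjTranspose_mul_self,
    conjTranspose_eq_transpose_of_trivial]

theorem l2_opNorm_sq_le_sum_sq [DecidableEq n] (A : Matrix m n ℝ) :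
    ‖A‖ ^ 2 ≤ ∑ i, ∑ j, A i j ^ 2 := by
  have hA := isHermitian_transpose_mul_self A
  have hev : ∀ j, 0 ≤ hA.eigenvalues j := eigenvalues_conjTranspose_mul_self_nonneg A
  have htrace : ∑ j, hA.eigenvalues j = ∑ i, ∑ j, A i j ^ 2 := by
    have := hA.trace_eq_sum_eigenvalues
    simp only [RCLike.ofReal_real_eq_id, id] at this
    rw [← this, trace, Finset.sum_comm]
    simp [mul_apply, sq]
  rw [l2_opNorm_sq_eq_norm_eigenvalues, ← htrace]
  refine (pi_norm_le_iff_of_nonneg (Finset.sum_nonneg fun j _ => hev j)).mpr fun j => ?_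
  rw [Real.norm_of_nonneg (hev j)]
  exact Finset.single_le_sum (fun j _ => hev j) (Finset.mem_univ j)

theorem l2_opNorm_le_of_forall_norm_mulVec_le {𝕜 : Type*} [RCLike 𝕜] [DecidableEq n]
    (A : Matrix m n 𝕜) {c : ℝ} (hc : 0 ≤ c)
    (h : ∀ x : EuclideanSpace 𝕜 n, ‖toLp 2 (A *ᵥ x)‖ ≤ c * ‖x‖) : ‖A‖ ≤ c :=
  ContinuousLinearMap.opNorm_le_bound _ hc h

theorem l2_opNorm_transpose [DecidableEq m] [DecidableEq n] (A : Matrix m n ℝ) :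
    ‖Aᵀ‖ = ‖A‖ := by
  rw [← conjTranspose_eq_transpose_of_trivial, l2_opNorm_conjTranspose]

theorem l2_opNorm_le_one_of_transpose_mul_self_eq_one [DecidableEq n] (U : Matrix m n ℝ)
    (hU : Uᵀ * U = 1) : ‖U‖ ≤ 1 := by
  have h := l2_opNorm_conjTranspose_mul_self U
  rw [conjTranspose_eq_transpose_of_trivial, hU, ← diagonal_one, l2_opNorm_diagonal] at h
  have h1 : ‖U‖ * ‖U‖ ≤ 1 := h ▸ (pi_norm_const_le (1 : ℝ)).trans norm_one.le
  nlinarith [norm_nonneg U]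

theorem one_sub_norm_sub_mul_norm_le_norm_mulVec [DecidableEq m] [DecidableEq n]
    (U X : Matrix m n ℝ) (hU : Uᵀ * U = 1) (x : EuclideanSpace ℝ n) :
    (1 - ‖X - U‖) * ‖x‖ ≤ ‖toLp 2 (X *ᵥ x)‖ := by
  have hUx : ‖x‖ ≤ ‖toLp 2 (U *ᵥ x)‖ := calc
    ‖x‖ = ‖toLp 2 (Uᵀ *ᵥ ofLp (toLp 2 (U *ᵥ x)))‖ := by
      rw [ofLp_toLp, mulVec_mulVec, hU, one_mulVec, toLp_ofLp]
    _ ≤ ‖Uᵀ‖ * ‖toLp 2 (U *ᵥ x)‖ := l2_opNorm_mulVec _ _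
    _ ≤ ‖toLp 2 (U *ᵥ x)‖ := by
      rw [l2_opNorm_transpose]
      exact mul_le_of_le_one_left (norm_nonneg _)
        (l2_opNorm_le_one_of_transpose_mul_self_eq_one U hU)
  have hEx : ‖toLp 2 (X *ᵥ x) - toLp 2 (U *ᵥ x)‖ ≤ ‖X - U‖ * ‖x‖ := by
    rw [← toLp_sub, ← sub_mulVec]; exact l2_opNorm_mulVec _ _
  linarith [norm_le_norm_add_norm_sub (toLp 2 (X *ᵥ x)) (toLp 2 (U *ᵥ x))]

theorem sq_mul_norm_le_norm_transpose_mul_self_mulVec (X : Matrix m n ℝ) {c : ℝ} (hc : 0 ≤ c)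
    (hX : ∀ x : EuclideanSpace ℝ n, c * ‖x‖ ≤ ‖toLp 2 (X *ᵥ x)‖) (x : EuclideanSpace ℝ n) :
    c ^ 2 * ‖x‖ ≤ ‖toLp 2 ((Xᵀ * X) *ᵥ x)‖ := by
  have hsq : (c * ‖x‖) ^ 2 ≤ ‖x‖ * ‖toLp 2 ((Xᵀ * X) *ᵥ x)‖ := calc
    (c * ‖x‖) ^ 2 ≤ ‖toLp 2 (X *ᵥ x)‖ ^ 2 := pow_le_pow_left₀ (by positivity) (hX x) 2
    _ = inner ℝ x (toLp 2 ((Xᵀ * X) *ᵥ x)) := by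
      rw [← real_inner_self_eq_norm_sq, EuclideanSpace.inner_eq_star_dotProduct,
        EuclideanSpace.inner_eq_star_dotProduct]
      simp [← mulVec_mulVec, dotProduct_mulVec, vecMul_transpose, dotProduct_comm]
    _ ≤ ‖x‖ * ‖toLp 2 ((Xᵀ * X) *ᵥ x)‖ := real_inner_le_norm _ _
  rcases (norm_nonneg x).eq_or_lt with hx | hx
  · rw [← hx, mul_zero]; exact norm_nonneg _
  · nlinarith

theorem isUnit_det_and_l2_opNorm_inv_le [DecidableEq n] (G : Matrix n n ℝ) {c : ℝ} (hc : 0 < c)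
    (hG : ∀ x : EuclideanSpace ℝ n, c * ‖x‖ ≤ ‖toLp 2 (G *ᵥ x)‖) :
    IsUnit G.det ∧ ‖G⁻¹‖ ≤ c⁻¹ := by
  have hdet : IsUnit G.det := by
    refine (isUnit_iff_isUnit_det G).mp (mulVec_injective_iff_isUnit.mp fun v w hvw => ?_)
    have h := hG (toLp 2 (v - w))
    rw [ofLp_toLp, mulVec_sub, hvw, sub_self, toLp_zero, norm_zero] at h
    have : ‖toLp 2 (v - w)‖ = 0 :=
      le_antisymm (nonpos_of_mul_nonpos_right h hc) (norm_nonneg _)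
    simpa [sub_eq_zero] using this
  refine ⟨hdet, l2_opNorm_le_of_forall_norm_mulVec_le _ (inv_nonneg.mpr hc.le) fun y => ?_⟩
  have h := hG (toLp 2 (G⁻¹ *ᵥ y))
  rw [ofLp_toLp, mulVec_mulVec, mul_nonsing_inv _ hdet, one_mulVec, toLp_ofLp] at h
  rw [inv_mul_eq_div, le_div_iff₀ hc]
  linarith

theorem l2_opNorm_transpose_mul_self_sub_le [DecidableEq m] [DecidableEq n]
    (X U : Matrix m n ℝ) :
    ‖Xᵀ * X - Uᵀ * U‖ ≤ (‖X‖ + ‖U‖) * ‖X - U‖ := by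
  have hid : Xᵀ * X - Uᵀ * U = Xᵀ * (X - U) + (X - U)ᵀ * U := by
    rw [transpose_sub, Matrix.mul_sub, Matrix.sub_mul]; abel
  calc ‖Xᵀ * X - Uᵀ * U‖ ≤ ‖Xᵀ‖ * ‖X - U‖ + ‖(X - U)ᵀ‖ * ‖U‖ := by
        rw [hid]
        exact (norm_add_le _ _).trans (add_le_add (l2_opNorm_mul _ _) (l2_opNorm_mul _ _))
    _ = (‖X‖ + ‖U‖) * ‖X - U‖ := by rw [l2_opNorm_transpose, l2_opNorm_transpose]; ring

theorem l2_opNorm_mul_inv_transpose_mul_self_sub_le [DecidableEq m] [DecidableEq n]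
    (U X : Matrix m n ℝ) (hU : Uᵀ * U = 1) {ε : ℝ} (hε : ε ≤ 1 / 2) (hX : ‖X - U‖ ≤ ε) :
    ‖X * (Xᵀ * X)⁻¹ - U‖ ≤ 16 * ε := by
  have hε0 : 0 ≤ ε := (norm_nonneg _).trans hX
  have hU1 := l2_opNorm_le_one_of_transpose_mul_self_eq_one U hU
  have hX1 : ‖X‖ ≤ 1 + ε := by linarith [norm_le_norm_add_norm_sub' X U]
  have hXlow : ∀ x : EuclideanSpace ℝ n, 1 / 2 * ‖x‖ ≤ ‖toLp 2 (X *ᵥ x)‖ := fun x =>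
    (mul_le_mul_of_nonneg_right (by linarith) (norm_nonneg x)).trans
      (one_sub_norm_sub_mul_norm_le_norm_mulVec U X hU x)
  obtain ⟨hdet, hGinv⟩ := isUnit_det_and_l2_opNorm_inv_le (Xᵀ * X) (by norm_num)
    (sq_mul_norm_le_norm_transpose_mul_self_mulVec X (by norm_num) hXlow)
  norm_num at hGinv
  have hG : ‖Xᵀ * X - 1‖ ≤ 5 / 2 * ε := by
    have h := l2_opNorm_transpose_mul_self_sub_le X U
    rw [hU] at h
    nlinarith [norm_nonneg (X - U)]
  have hGinv1 : ‖(Xᵀ * X)⁻¹ - 1‖ ≤ 10 * ε := calc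
    ‖(Xᵀ * X)⁻¹ - 1‖ = ‖(Xᵀ * X)⁻¹ * (1 - Xᵀ * X)‖ := by
      rw [Matrix.mul_sub, Matrix.mul_one, nonsing_inv_mul _ hdet]
    _ ≤ ‖(Xᵀ * X)⁻¹‖ * ‖Xᵀ * X - 1‖ := by rw [norm_sub_rev]; exact l2_opNorm_mul _ _
    _ ≤ 4 * (5 / 2 * ε) := mul_le_mul hGinv hG (norm_nonneg _) (by norm_num)
    _ = 10 * ε := by ring
  calc ‖X * (Xᵀ * X)⁻¹ - U‖ = ‖X * ((Xᵀ * X)⁻¹ - 1) + (X - U)‖ := by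
        rw [Matrix.mul_sub, Matrix.mul_one]; abel_nf
    _ ≤ ‖X‖ * ‖(Xᵀ * X)⁻¹ - 1‖ + ‖X - U‖ := (norm_add_le _ _).trans
        (add_le_add_left (l2_opNorm_mul _ _) _)
    _ ≤ (1 + ε) * (10 * ε) + ε := by gcongr
    _ ≤ 16 * ε := by nlinarith

theorem mul_mul_inv_transpose_mul_self_mul_transpose {R : Type*} [CommRing R] [DecidableEq n]
    (X : Matrix m n R) (P : Matrix n n R) (hP : IsUnit P.det) :
    X * P * ((X * P)ᵀ * (X * P))⁻¹ * Pᵀ = X * (Xᵀ * X)⁻¹ := by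
  have hPt : IsUnit Pᵀ.det := by rwa [det_transpose]
  rw [transpose_mul, Matrix.mul_assoc Pᵀ, ← Matrix.mul_assoc Xᵀ, mul_inv_rev, mul_inv_rev]
  simp only [Matrix.mul_assoc]
  rw [nonsing_inv_mul _ hPt, Matrix.mul_one, mul_nonsing_inv_cancel_left _ _ hP]

end Matrix

namespace HomoPursuit

section sval

variable {m n : Type*} [Fintype m] [Fintype n] [DecidableEq n]

theorem sval_succ_le (A : Matrix m n ℝ) {t : ℝ} (ht : 0 ≤ t) {k : ℕ}
    (hk : (Finset.univ.val.map (isHermitian_transpose_mul_self A).eigenvalues).countP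
      (fun x => t ^ 2 < x) ≤ k) :
    sval A (k + 1) ≤ t := by
  refine List.getD_le_of_countP_lt_le (List.pairwise_insertionSort _ _) ht ?_
  rw [(List.perm_insertionSort _ _).countP_eq, ← Multiset.coe_countP, Multiset.coe_toList,
    Multiset.countP_map]
  rw [Multiset.countP_map] at hk
  simpa only [Real.lt_sqrt ht, Nat.add_sub_cancel] using hk

theorem sval_nonneg (A : Matrix m n ℝ) (j : ℕ) : 0 ≤ sval A j := by
  have getD_nonneg : ∀ l : List ℝ, (∀ x ∈ l, 0 ≤ x) → 0 ≤ l.getD (j - 1) 0 := fun l hl => by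
    rcases lt_or_ge (j - 1) l.length with h | h
    · rw [List.getD_eq_getElem _ _ h]; exact hl _ (List.getElem_mem h)
    · rw [List.getD_eq_default _ _ h]
  refine getD_nonneg _ fun x hx => ?_
  obtain ⟨i, -, rfl⟩ := Multiset.mem_map.mp
    (Multiset.mem_toList.mp ((List.perm_insertionSort _ _).mem_iff.mp hx))
  exact Real.sqrt_nonneg _

theorem spec_le_l2_opNorm (A : Matrix m n ℝ) : spec A ≤ ‖A‖ := by
  refine sval_succ_le A (norm_nonneg A) (le_of_eq (Multiset.countP_eq_zero.mpr fun x hx => ?_))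
  obtain ⟨i, -, rfl⟩ := Multiset.mem_map.mp hx
  rw [not_lt, l2_opNorm_sq_eq_norm_eigenvalues]
  exact (le_abs_self _).trans
    (norm_le_pi_norm (f := (isHermitian_transpose_mul_self A).eigenvalues) i)

theorem sval_card_le_of_eq_mul_diagonal_mul_transpose {ι : Type*} [Fintype ι] [DecidableEq ι]
    (M : Matrix m n ℝ) (U : Matrix m ι ℝ) (V : Matrix n ι ℝ) (s : ι → ℝ) (hU : Uᵀ * U = 1)
    (hV : Vᵀ * V = 1) (hM : M = U * diagonal s * Vᵀ) (j : ι) (hj : 0 ≤ s j) :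
    sval M (Fintype.card ι) ≤ s j := by
  have hgram : Mᵀ * M = V * diagonal (fun i => s i ^ 2) * Vᵀ := by
    rw [hM, transpose_mul, transpose_mul, transpose_transpose, diagonal_transpose]
    simp only [Matrix.mul_assoc]
    rw [← Matrix.mul_assoc Uᵀ, hU, Matrix.one_mul, ← Matrix.mul_assoc (diagonal s),
      diagonal_mul_diagonal]
    simp only [sq]
  have hev := roots_charpoly_mul_diagonal_mul_transpose V hV (fun i => s i ^ 2)
  rw [← hgram, (isHermitian_transpose_mul_self M).roots_charpoly_eq_eigenvalues] at hev
  have hzero : Multiset.countP (fun x => s j ^ 2 < x) {0} = 0 :=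
    Multiset.countP_eq_zero.mpr fun x hx => by
      rw [Multiset.mem_singleton.mp hx]; exact not_lt.mpr (sq_nonneg _)
  have hcount := congrArg (Multiset.countP fun x => s j ^ 2 < x) hev
  simp only [Multiset.countP_add, Multiset.countP_nsmul, hzero, mul_zero, zero_add,
    RCLike.ofReal_real_eq_id, Function.id_comp] at hcount
  have hle : (Finset.univ.val.map (isHermitian_transpose_mul_self M).eigenvalues).countP
      (fun x => s j ^ 2 < x) ≤ Fintype.card ι - 1 := by
    rw [hcount, Multiset.countP_map, ← Finset.filter_val, ← Finset.card_def, ← Finset.card_univ,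
      ← Finset.card_erase_of_mem (Finset.mem_univ j)]
    exact Finset.card_le_card fun i hi => Finset.mem_erase.mpr
      ⟨fun hij => by simp [hij] at hi, Finset.mem_univ i⟩
  have := sval_succ_le M hj hle
  rwa [Nat.sub_add_cancel (Fintype.card_pos_iff.mpr ⟨j⟩)] at this

end sval

theorem frobSq_nonneg {m n : Type*} [Fintype m] [Fintype n] (A : Matrix m n ℝ) : 0 ≤ frobSq A :=
  Finset.sum_nonneg fun _ _ => Finset.sum_nonneg fun _ _ => sq_nonneg _

section diagSqrt

variable {m : Type*} [Fintype m] {r : ℕ} {d : Fin r → ℝ}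

theorem diagSqrt_transpose : (diagSqrt d)ᵀ = diagSqrt d :=
  diagonal_transpose _

theorem isUnit_det_diagSqrt (hd : ∀ j, 0 < d j) : IsUnit (diagSqrt d).det := by
  rw [diagSqrt, det_diagonal]
  exact (Finset.prod_pos fun j _ => Real.sqrt_pos.mpr (hd j)).ne'.isUnit

theorem inv_diagSqrt (hd : ∀ j, 0 < d j) : (diagSqrt d)⁻¹ = diagSqrt d * diagonal d⁻¹ := by
  refine inv_eq_right_inv ?_
  rw [diagSqrt, ← Matrix.mul_assoc, diagonal_mul_diagonal, diagonal_mul_diagonal, ← diagonal_one]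
  congr 1
  ext j
  rw [Real.mul_self_sqrt (hd j).le, Pi.inv_apply, mul_inv_cancel₀ (hd j).ne']

theorem l2_opNorm_mul_inv_diagSqrt_le_of_frobSq_le (A : Matrix m (Fin r) ℝ) (hd : ∀ j, 0 < d j)
    {σ ε : ℝ} (hσ : 0 ≤ σ) (hσd : ∀ j, σ ≤ d j) (hε : 0 ≤ ε) (hA : frobSq (A * diagSqrt d) ≤ ε ^ 2 * σ ^ 2) :
    ‖A * (diagSqrt d)⁻¹‖ ≤ ε := by
  have hAP : ‖A * diagSqrt d‖ ≤ ε * σ := (sq_le_sq₀ (norm_nonneg _) (by positivity)).mp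
    ((l2_opNorm_sq_le_sum_sq _).trans (hA.trans_eq (by ring)))
  have hsplit : ‖A * (diagSqrt d)⁻¹‖ ≤ ‖A * diagSqrt d‖ * ‖(diagonal d⁻¹ : Matrix _ _ ℝ)‖ := by
    rw [inv_diagSqrt hd, ← Matrix.mul_assoc]; exact l2_opNorm_mul _ _
  rcases hσ.eq_or_lt with rfl | hσ
  · -- `σ = 0` forces `A * diagSqrt d = 0`
    nlinarith [norm_nonneg (diagonal d⁻¹ : Matrix (Fin r) (Fin r) ℝ)]
  · have hdinv : ‖(diagonal d⁻¹ : Matrix _ _ ℝ)‖ ≤ σ⁻¹ := by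
      rw [l2_opNorm_diagonal]
      refine (pi_norm_le_iff_of_nonneg (inv_nonneg.mpr hσ.le)).mpr fun j => ?_
      rw [Pi.inv_apply, norm_inv, Real.norm_of_nonneg (hd j).le]
      exact inv_anti₀ hσ (hσd j)
    calc ‖A * (diagSqrt d)⁻¹‖ ≤ ε * σ * σ⁻¹ := hsplit.trans (by gcongr)
      _ = ε := by field_simp

theorem l2_opNorm_mul_inv_transpose_mul_self_mul_diagSqrt_sub_le [DecidableEq m]
    (U K : Matrix m (Fin r) ℝ) (hd : ∀ j, 0 < d j) (hU : Uᵀ * U = 1) {ε : ℝ}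
    (hε : ε ≤ 1 / 2) (hK : ‖(K - U * diagSqrt d) * (diagSqrt d)⁻¹‖ ≤ ε) :
    ‖K * (Kᵀ * K)⁻¹ * diagSqrt d - U‖ ≤ 16 * ε := by
  have hP := isUnit_det_diagSqrt hd
  have hrescale := mul_mul_inv_transpose_mul_self_mul_transpose (K * (diagSqrt d)⁻¹) _ hP
  rw [nonsing_inv_mul_cancel_right _ _ hP, diagSqrt_transpose] at hrescale
  rw [hrescale]
  refine l2_opNorm_mul_inv_transpose_mul_self_sub_le U _ hU hε ?_
  rwa [Matrix.sub_mul, mul_nonsing_inv_cancel_right _ _ hP] at hK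

end diagSqrt

/-- **Lemma (low-rank matrix factorization perturbation bounds).** -/
theorem matrix_factorization_perturbation_bounds :
    ∃ C : ℝ, 0 < C ∧
      ∀ (ε : ℝ), 0 < ε → ε ≤ 1 / 2 →
      ∀ (p1 p2 r : ℕ) (Ms : Matrix (Fin p1) (Fin p2) ℝ)
        (Us : Matrix (Fin p1) (Fin r) ℝ) (Vs : Matrix (Fin p2) (Fin r) ℝ)
        (Sd : Fin r → ℝ)
        (L : Matrix (Fin p1) (Fin r) ℝ) (R : Matrix (Fin p2) (Fin r) ℝ),
        -- SVD of `M*` with positive diagonal `Σ`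
        (∀ j, 0 < Sd j) →
        Usᵀ * Us = 1 → Vsᵀ * Vs = 1 →
        Ms = Us * Matrix.diagonal Sd * Vsᵀ →
        Ms.rank = r →
        -- perturbation assumption
        frobSq ((L - Us * diagSqrt Sd) * diagSqrt Sd) +
            frobSq ((R - Vs * diagSqrt Sd) * diagSqrt Sd) ≤ ε ^ 2 * (sval Ms r) ^ 2 →
        -- conclusions
        spec ((L - Us * diagSqrt Sd) * (diagSqrt Sd)⁻¹) ≤ ε ∧
        spec ((R - Vs * diagSqrt Sd) * (diagSqrt Sd)⁻¹) ≤ ε ∧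
        spec (L * (Lᵀ * L)⁻¹ * diagSqrt Sd) ≤ 1 + C * ε ∧
        spec (R * (Rᵀ * R)⁻¹ * diagSqrt Sd) ≤ 1 + C * ε ∧
        spec (L * (Lᵀ * L)⁻¹ * diagSqrt Sd - Us) ≤ C * ε ∧
        spec (R * (Rᵀ * R)⁻¹ * diagSqrt Sd - Vs) ≤ C * ε := by
  refine ⟨16, by norm_num, fun ε hε0 hε p1 p2 r Ms Us Vs Sd L R hSd hU hV hM _ hpert => ?_⟩
  have hσ : ∀ j, sval Ms r ≤ Sd j := fun j => by
    simpa using sval_card_le_of_eq_mul_diagonal_mul_transpose Ms Us Vs Sd hU hV hM j (hSd j).le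
  have hL := l2_opNorm_mul_inv_diagSqrt_le_of_frobSq_le (L - Us * diagSqrt Sd) hSd
    (sval_nonneg Ms r) hσ hε0.le
    (by linarith [frobSq_nonneg ((R - Vs * diagSqrt Sd) * diagSqrt Sd)])
  have hR := l2_opNorm_mul_inv_diagSqrt_le_of_frobSq_le (R - Vs * diagSqrt Sd) hSd
    (sval_nonneg Ms r) hσ hε0.le
    (by linarith [frobSq_nonneg ((L - Us * diagSqrt Sd) * diagSqrt Sd)])
  have hLU := l2_opNorm_mul_inv_transpose_mul_self_mul_diagSqrt_sub_le Us L hSd hU hε hL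
  have hRV := l2_opNorm_mul_inv_transpose_mul_self_mul_diagSqrt_sub_le Vs R hSd hV hε hR
  refine ⟨(spec_le_l2_opNorm _).trans hL, (spec_le_l2_opNorm _).trans hR,
    (spec_le_l2_opNorm _).trans ?_, (spec_le_l2_opNorm _).trans ?_,
    (spec_le_l2_opNorm _).trans hLU, (spec_le_l2_opNorm _).trans hRV⟩
  · linarith [norm_le_norm_add_norm_sub' (L * (Lᵀ * L)⁻¹ * diagSqrt Sd) Us,
      l2_opNorm_le_one_of_transpose_mul_self_eq_one Us hU]
  · linarith [norm_le_norm_add_norm_sub' (R * (Rᵀ * R)⁻¹ * diagSqrt Sd) Vs,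
      l2_opNorm_le_one_of_transpose_mul_self_eq_one Vs hV]

end HomoPursuit
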